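/- arXiv:1506.04158 — 5 statements merged into one kernel-verified Lean document; each statement's English description precedes it below -/
import Mathlib

section
/- Let K = 3n (n a positive integer), and define B = diag(a, b, c) with a, b, c > 0, and Z ∈ {0,1}^{3n×3} the matrix whose first n rows equal (1,1,0), next n rows equal (0,1,1), and last n rows equal (1,0,1). Define B' with rows (a+b, b, a), (b, b+c, c), (a, c, a+c) and Z' ∈ {0,1}^{3n×3} whose first n rows are (1,0,0), next n rows (0,1,0), last n rows (0,0,1). Then Z B Zᵀ = Z' B' Z'ᵀ. Hence the SBMO without further assumptions is not identifiable. -/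
open Matrix

/-- Example 1: the SBMO with three overlapping communities given by `B = diag(a,b,c)` and
block membership matrix `Z` has the same expected adjacency matrix as the SBM `(Z', B')`,
hence the SBMO without further assumptions is not identifiable. -/
theorem sbmo_not_identifiable (n : ℕ) (hn : 0 < n) (a b c : ℝ)
    (ha : 0 < a) (hb : 0 < b) (hc : 0 < c)
    (B : Matrix (Fin 3) (Fin 3) ℝ) (hB : B = Matrix.diagonal ![a, b, c])
    (Z : Matrix (Fin (3 * n)) (Fin 3) ℝ)
    (hZ : Z = Matrix.of fun (i : Fin (3 * n)) (k : Fin 3) =>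
      if (i : ℕ) < n then ![(1 : ℝ), 1, 0] k
      else if (i : ℕ) < 2 * n then ![(0 : ℝ), 1, 1] k
      else ![(1 : ℝ), 0, 1] k)
    (B' : Matrix (Fin 3) (Fin 3) ℝ)
    (hB' : B' = !![a + b, b, a; b, b + c, c; a, c, a + c])
    (Z' : Matrix (Fin (3 * n)) (Fin 3) ℝ)
    (hZ' : Z' = Matrix.of fun (i : Fin (3 * n)) (k : Fin 3) =>
      if (i : ℕ) < n then ![(1 : ℝ), 0, 0] k
      else if (i : ℕ) < 2 * n then ![(0 : ℝ), 1, 0] k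
      else ![(0 : ℝ), 0, 1] k) :
    Z * B * Zᵀ = Z' * B' * Z'ᵀ := by
  subst hB hZ hB' hZ'
  ext i j
  simp only [Matrix.mul_apply, Matrix.transpose_apply, Matrix.of_apply,
    Fin.sum_univ_three, Matrix.diagonal_apply, Matrix.cons_val', Matrix.cons_val_zero,
    Matrix.cons_val_one, Matrix.head_cons, Matrix.head_fin_const, Matrix.empty_val',
    Matrix.cons_val_fin_one, Matrix.of_apply]
  norm_num [Fin.ext_iff, Matrix.cons_val_zero, Matrix.cons_val_one, Matrix.head_cons]
  split_ifs <;> norm_num [Matrix.cons_val_two, Matrix.tail_cons] <;> ring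
end

section
/- Let Z ∈ {0,1}^{n×K} contain a pure node for each community, let X, X' ∈ ℝ^{K×K} be invertible, and let Z' ∈ {0,1}^{n×K} have no zero row and contain a pure node for each community. If Z X = Z' X', then there exists a permutation σ ∈ S_K such that Z = Z' P_σ. -/
open Matrix

/-- Uniqueness of the factorization `U = Z X` (Proposition 2, statement 2): if `Z X = Z' X'`
with `X, X'` invertible, `Z, Z'` binary, `Z` containing a pure node per community,
`Z'` with no zero row and a pure node per community, then `Z = Z' P_σ` for some
permutation `σ`. -/
theorem factorization_unique {n K : ℕ}
    (Z Z' : Matrix (Fin n) (Fin K) ℝ)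
    (X X' : Matrix (Fin K) (Fin K) ℝ)
    (hX : IsUnit X.det) (hX' : IsUnit X'.det)
    (hZbin : ∀ i k, Z i k = 0 ∨ Z i k = 1)
    (hZ'bin : ∀ i k, Z' i k = 0 ∨ Z' i k = 1)
    (hZpure : ∀ k : Fin K, ∃ i : Fin n, Z i = Pi.single k 1)
    (hZ'nozero : ∀ i : Fin n, Z' i ≠ 0)
    (hZ'pure : ∀ k : Fin K, ∃ i : Fin n, Z' i = Pi.single k 1)
    (heq : Z * X = Z' * X') :
    ∃ σ : Equiv.Perm (Fin K),
      Z = Z' * (Matrix.of fun k l => if σ k = l then (1 : ℝ) else 0) := by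
  set Q : Matrix (Fin K) (Fin K) ℝ := X' * X⁻¹ with hQdef
  -- Z = Z' * Q
  have hZQ : Z = Z' * Q := by
    have h1 : Z * X * X⁻¹ = Z' * X' * X⁻¹ := by rw [heq]
    rwa [Matrix.mul_assoc, Matrix.mul_assoc, Matrix.mul_nonsing_inv X hX,
      Matrix.mul_one] at h1
  -- multiplying a pure row picks out a row of Q
  have hpick : ∀ (i : Fin n) (k : Fin K), Z' i = Pi.single k 1 →
      ∀ j, Z i j = Q k j := by
    intro i k hik j
    rw [hZQ]
    rw [Matrix.mul_apply]
    rw [show (fun m => Z' i m * Q m j) = fun m => (Pi.single k 1 : Fin K → ℝ) m * Q m j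
      from by funext m; rw [hik]]
    simp [Pi.single_apply, ite_mul]
  -- Q is binary
  have hQbin : ∀ k j, Q k j = 0 ∨ Q k j = 1 := by
    intro k j
    obtain ⟨i, hi⟩ := hZ'pure k
    rw [← hpick i k hi j]
    exact hZbin i j
  -- Q is invertible, hence has no zero row
  have hQdet : IsUnit Q.det := by
    rw [hQdef, Matrix.det_mul]
    exact hX'.mul (X.isUnit_nonsing_inv_det hX)
  have hQnozero : ∀ k, Q k ≠ 0 := by
    intro k hk
    have : Q.det = 0 := Matrix.det_eq_zero_of_row_eq_zero k (fun j => congrFun hk j)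
    rw [this] at hQdet
    exact not_isUnit_zero hQdet
  -- every standard basis vector is a row of Q
  have hrow : ∀ l : Fin K, ∃ k, Q k = Pi.single l 1 := by
    intro l
    obtain ⟨i, hi⟩ := hZpure l
    have hsum : ∀ j, ∑ m, Z' i m * Q m j = (Pi.single l 1 : Fin K → ℝ) j := by
      intro j
      rw [hZQ] at hi
      have := congrFun hi j
      rwa [Matrix.mul_apply] at this
    -- find a nonzero entry of Z' i
    obtain ⟨k0, hk0⟩ := Function.ne_iff.mp (hZ'nozero i)
    have hk01 : Z' i k0 = 1 := (hZ'bin i k0).resolve_left hk0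
    refine ⟨k0, funext fun j => ?_⟩
    have hnonneg : ∀ m j', 0 ≤ Z' i m * Q m j' := by
      intro m j'
      apply mul_nonneg
      · rcases hZ'bin i m with h | h <;> rw [h] <;> norm_num
      · rcases hQbin m j' with h | h <;> rw [h] <;> norm_num
    by_cases hjl : j = l
    · subst hjl
      -- show Q k0 j = 1, using that Q k0 vanishes off column j and rows are nonzero
      have hoff : ∀ j', j' ≠ j → Q k0 j' = 0 := by
        intro j' hj'
        have hs : ∑ m, Z' i m * Q m j' = 0 := by
          rw [hsum j', Pi.single_apply, if_neg hj']
        have := (Finset.sum_eq_zero_iff_of_nonneg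
          (fun m _ => hnonneg m j')).mp hs k0 (Finset.mem_univ k0)
        · rwa [hk01, one_mul] at this
      have h1 : Q k0 j = 1 := by
        rcases hQbin k0 j with h | h
        · exfalso
          apply hQnozero k0
          funext j'
          by_cases hj' : j' = j
          · rw [hj', h]; rfl
          · rw [hoff j' hj']; rfl
        · exact h
      rw [h1, Pi.single_apply, if_pos rfl]
    · have hs : ∑ m, Z' i m * Q m j = 0 := by
        rw [hsum j, Pi.single_apply, if_neg hjl]
      have := (Finset.sum_eq_zero_iff_of_nonneg
        (fun m _ => hnonneg m j)).mp hs k0 (Finset.mem_univ k0)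
      rw [hk01, one_mul] at this
      rw [this, Pi.single_apply, if_neg hjl]
  -- build the permutation
  choose f hf using hrow
  have hinj : Function.Injective f := by
    intro a b hab
    have : (Pi.single a 1 : Fin K → ℝ) = Pi.single b 1 := by rw [← hf a, ← hf b, hab]
    by_contra hne
    have := congrFun this a
    rw [Pi.single_apply, if_pos rfl, Pi.single_apply, if_neg hne] at this
    norm_num at this
  have hbij : Function.Bijective f := Finite.injective_iff_bijective.mp hinj
  let σ : Equiv.Perm (Fin K) := Equiv.ofBijective f hbij
  refine ⟨σ.symm, ?_⟩
  rw [hZQ]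
  congr 1
  ext k j
  have hk : f (σ.symm k) = k := σ.apply_symm_apply k
  have := congrFun (hf (σ.symm k)) j
  rw [hk] at this
  rw [this, Matrix.of_apply, Pi.single_apply]
  by_cases h : σ.symm k = j
  · rw [if_pos h, if_pos h.symm]
  · rw [if_neg h, if_neg (fun hh => h hh.symm)]
end

section
/- Let A = (α/n) Z B Zᵀ with Z ∈ {0,1}^{n×K} of rank K, B ∈ ℝ^{K×K} symmetric, α > 0, and let O = (1/n) ZᵀZ. Then O is symmetric positive definite, and for x ∈ ℝ^K and μ ≠ 0: Zx is an eigenvector of A with eigenvalue αμ if and only if O^{1/2}x is an eigenvector of M₀ := O^{1/2} B O^{1/2} with eigenvalue μ. Consequently every nonzero eigenvalue of A equals α times an eigenvalue of M₀. -/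
open Matrix

open scoped ComplexOrder in
/-- The square root of a positive semidefinite matrix, as defined in Mathlib (Dec 2024). -/
noncomputable def Matrix.PosSemidef.sqrt {n 𝕜 : Type*} [Fintype n] [RCLike 𝕜] [DecidableEq n]
    {A : Matrix n n 𝕜} (hA : A.PosSemidef) : Matrix n n 𝕜 :=
  hA.1.eigenvectorUnitary.1 * diagonal ((↑) ∘ (√·) ∘ hA.1.eigenvalues) *
  (star hA.1.eigenvectorUnitary : Matrix n n 𝕜)

private lemma zinj {n K : ℕ} (Z : Matrix (Fin n) (Fin K) ℝ) (hrank : Z.rank = K) :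
    ∀ x, Z.mulVec x = 0 → x = 0 := by
  have h := LinearMap.finrank_range_add_finrank_ker Z.mulVecLin
  rw [Matrix.rank] at hrank
  rw [hrank, Module.finrank_pi, Fintype.card_fin] at h
  have hker : LinearMap.ker Z.mulVecLin = ⊥ := Submodule.finrank_eq_zero.mp (by omega)
  intro x hx
  exact LinearMap.ker_eq_bot.mp hker (by simpa [Matrix.mulVecLin_apply] using hx)


/-- Proposition 3: with `A = (α/n) Z B Zᵀ`, `O = (1/n) ZᵀZ`, `Z` of rank `K`, `O` is positive
definite; `Zx` is an eigenvector of `A` with eigenvalue `αμ` iff `O^{1/2}x` is an eigenvector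
of `M₀ = O^{1/2} B O^{1/2}` with eigenvalue `μ`; consequently every nonzero eigenvalue of `A`
is `α` times an eigenvalue of `M₀`. -/
theorem sbmo_spectrum {n K : ℕ}
    (α : ℝ) (hα : 0 < α)
    (B : Matrix (Fin K) (Fin K) ℝ) (hBsymm : B.IsSymm)
    (Z : Matrix (Fin n) (Fin K) ℝ)
    (hZbin : ∀ i k, Z i k = 0 ∨ Z i k = 1)
    (hrank : Z.rank = K)
    (A O : Matrix _ _ ℝ)
    (hA : A = (α / n) • (Z * B * Zᵀ))
    (hO : O = ((n : ℝ)⁻¹) • (Zᵀ * Z))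
    (hOpsd : O.PosSemidef) :
    O.PosDef ∧
    (∀ (x : Fin K → ℝ) (μ : ℝ), μ ≠ 0 →
      ((Z.mulVec x ≠ 0 ∧ A.mulVec (Z.mulVec x) = (α * μ) • Z.mulVec x) ↔
       (hOpsd.sqrt.mulVec x ≠ 0 ∧
        (hOpsd.sqrt * B * hOpsd.sqrt).mulVec (hOpsd.sqrt.mulVec x) =
          μ • hOpsd.sqrt.mulVec x))) ∧
    (∀ lam : ℝ, lam ≠ 0 → (∃ v, v ≠ 0 ∧ A.mulVec v = lam • v) →
      ∃ μ : ℝ, lam = α * μ ∧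
        ∃ w, w ≠ 0 ∧ (hOpsd.sqrt * B * hOpsd.sqrt).mulVec w = μ • w) := by
  have hZinj : ∀ x, Z.mulVec x = 0 → x = 0 := zinj Z hrank
  set S := hOpsd.sqrt with hSdef
  have hSS : S * S = O := by
    have hspec := hOpsd.1.spectral_theorem
    rw [Unitary.conjStarAlgAut_apply] at hspec
    have hU : (star hOpsd.1.eigenvectorUnitary : Matrix (Fin K) (Fin K) ℝ) *
        hOpsd.1.eigenvectorUnitary = 1 := Unitary.coe_star_mul_self _
    have hD : diagonal (RCLike.ofReal ∘ (√·) ∘ hOpsd.1.eigenvalues : Fin K → ℝ) *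
        diagonal (RCLike.ofReal ∘ (√·) ∘ hOpsd.1.eigenvalues : Fin K → ℝ) =
        diagonal (RCLike.ofReal ∘ hOpsd.1.eigenvalues : Fin K → ℝ) := by
      rw [diagonal_mul_diagonal]
      congr 1
      funext i
      simp [Real.mul_self_sqrt (hOpsd.eigenvalues_nonneg i)]
    conv_rhs => rw [hspec]
    rw [hSdef, Matrix.PosSemidef.sqrt]
    simp only [Matrix.mul_assoc]
    rw [← Matrix.mul_assoc (star _ : Matrix (Fin K) (Fin K) ℝ) _ (diagonal _ * _), hU,
      Matrix.one_mul, ← Matrix.mul_assoc (diagonal _) (diagonal _), hD]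
  -- case n = 0
  rcases Nat.eq_zero_or_pos n with hn0 | hnpos
  · subst hn0
    have hK0 : K = 0 := by
      have := Z.rank_le_card_height
      simp at this
      omega
    subst hK0
    refine ⟨PosDef.of_dotProduct_mulVec_pos hOpsd.1 (fun x hx => absurd (Subsingleton.elim x 0) hx), ?_, ?_⟩
    · intro x μ hμ
      constructor
      · rintro ⟨h1, -⟩; exact absurd (Subsingleton.elim _ 0) h1
      · rintro ⟨h1, -⟩; exact absurd (Subsingleton.elim _ 0) h1
    · rintro lam hlam ⟨v, hv, -⟩
      exact absurd (Subsingleton.elim v 0) hv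
  have hnne : (n : ℝ) ≠ 0 := Nat.cast_ne_zero.mpr hnpos.ne'
  have hZZ : Zᵀ * Z = (n : ℝ) • O := by
    rw [hO, smul_smul, mul_inv_cancel₀ hnne, one_smul]
  -- O is PosDef
  have hOpd : O.PosDef := by
    refine PosDef.of_dotProduct_mulVec_pos hOpsd.1 (fun x hx => ?_)
    have hZx : Z.mulVec x ≠ 0 := fun h => hx (hZinj x h)
    have hkey : star x ⬝ᵥ O.mulVec x = (n : ℝ)⁻¹ * (Z.mulVec x ⬝ᵥ Z.mulVec x) := by
      rw [hO]
      simp only [smul_mulVec, dotProduct_smul, smul_eq_mul]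
      congr 1
      rw [← Matrix.mulVec_mulVec, dotProduct_mulVec, star_trivial,
        Matrix.vecMul_transpose]
    rw [star_trivial] at hkey ⊢
    rw [hkey]
    have h1 : (0 : ℝ) < Z.mulVec x ⬝ᵥ Z.mulVec x := by
      have : Z.mulVec x ⬝ᵥ star (Z.mulVec x) = Z.mulVec x ⬝ᵥ Z.mulVec x := by
        simp [star_trivial]
      rw [← this]
      exact dotProduct_self_star_pos_iff.mpr hZx
    positivity
  -- S injective
  have hSinj : ∀ x, S.mulVec x = 0 → x = 0 := by
    intro x hx
    by_contra hne
    have : O.mulVec x = 0 := by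
      rw [← hSS, ← Matrix.mulVec_mulVec, hx, Matrix.mulVec_zero]
    have h2 := hOpd.dotProduct_mulVec_pos hne
    rw [this, dotProduct_zero] at h2
    exact lt_irrefl _ h2
  have hSinj' : ∀ a b : Fin K → ℝ, S.mulVec a = S.mulVec b → a = b := by
    intro a b h
    have : S.mulVec (a - b) = 0 := by rw [Matrix.mulVec_sub, h, sub_self]
    have h3 := hSinj _ this
    exact sub_eq_zero.mp h3
  have hZinj' : ∀ a b : Fin K → ℝ, Z.mulVec a = Z.mulVec b → a = b := by
    intro a b h
    have : Z.mulVec (a - b) = 0 := by rw [Matrix.mulVec_sub, h, sub_self]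
    exact sub_eq_zero.mp (hZinj _ this)
  have hAZ : ∀ x : Fin K → ℝ, A.mulVec (Z.mulVec x) = α • Z.mulVec ((B * O).mulVec x) := by
    intro x
    rw [hA, Matrix.smul_mulVec, Matrix.mulVec_mulVec]
    have : Z * B * Zᵀ * Z = (n : ℝ) • (Z * (B * O)) := by
      rw [Matrix.mul_assoc (Z * B), hZZ, Matrix.mul_smul, Matrix.mul_assoc]
    rw [this, Matrix.smul_mulVec, smul_smul, div_mul_cancel₀ α hnne,
      ← Matrix.mulVec_mulVec]
  have hM : ∀ x : Fin K → ℝ,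
      (S * B * S).mulVec (S.mulVec x) = S.mulVec ((B * O).mulVec x) := by
    intro x
    rw [Matrix.mulVec_mulVec]
    have : S * B * S * S = S * (B * O) := by
      rw [mul_assoc (S * B), hSS, mul_assoc]
    rw [this, ← Matrix.mulVec_mulVec]
  have key : ∀ (x : Fin K → ℝ) (μ : ℝ), μ ≠ 0 →
      ((Z.mulVec x ≠ 0 ∧ A.mulVec (Z.mulVec x) = (α * μ) • Z.mulVec x) ↔
       (S.mulVec x ≠ 0 ∧
        (S * B * S).mulVec (S.mulVec x) = μ • S.mulVec x)) := by
    intro x μ hμ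
    constructor
    · rintro ⟨h1, h2⟩
      have hxne : x ≠ 0 := fun h => h1 (by simp [h])
      refine ⟨fun h => hxne (hSinj _ h), ?_⟩
      have hBO : (B * O).mulVec x = μ • x := by
        rw [hAZ] at h2
        have h3 : α • Z.mulVec ((B * O).mulVec x) = α • (μ • Z.mulVec x) := by
          rw [h2, smul_smul]
        have h4 := smul_right_injective (Fin n → ℝ) hα.ne' h3
        rw [← Matrix.mulVec_smul] at h4
        exact hZinj' _ _ h4
      rw [hM, hBO, Matrix.mulVec_smul]
    · rintro ⟨h1, h2⟩
      have hxne : x ≠ 0 := fun h => h1 (by simp [h])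
      refine ⟨fun h => hxne (hZinj _ h), ?_⟩
      have hBO : (B * O).mulVec x = μ • x := by
        rw [hM, ← Matrix.mulVec_smul] at h2
        exact hSinj' _ _ h2
      rw [hAZ, hBO, Matrix.mulVec_smul, smul_smul]
  refine ⟨hOpd, key, ?_⟩
  rintro lam hlam ⟨v, hv, hAv⟩
  set μ := lam / α with hμdef
  have hμ : μ ≠ 0 := div_ne_zero hlam hα.ne'
  have hαμ : α * μ = lam := by rw [hμdef]; field_simp
  set x := ((α / n) / lam) • B.mulVec (Zᵀ.mulVec v) with hxdef
  have hZx : Z.mulVec x = v := by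
    rw [hxdef, Matrix.mulVec_smul]
    have hW : A.mulVec v = (α / n) • Z.mulVec (B.mulVec (Zᵀ.mulVec v)) := by
      rw [hA, Matrix.smul_mulVec, ← Matrix.mulVec_mulVec, ← Matrix.mulVec_mulVec]
    have : Z.mulVec (B.mulVec (Zᵀ.mulVec v)) = ((n : ℝ) / α) • (lam • v) := by
      have hαn : (α / n : ℝ) ≠ 0 := div_ne_zero hα.ne' hnne
      rw [hAv] at hW
      have := congrArg (fun w => ((n : ℝ) / α) • w) hW.symm
      simpa [smul_smul, div_mul_div_comm, mul_comm, hα.ne', hnne,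
        div_mul_cancel₀, mul_div_assoc] using this
    rw [this, smul_smul, smul_smul]
    have h9 : α / ↑n / lam * (↑n / α) * lam = 1 := by
      field_simp
    rw [h9, one_smul]
  refine ⟨μ, hαμ.symm, S.mulVec x, ?_⟩
  have := (key x μ hμ).mp ⟨by rw [hZx]; exact hv, by rw [hZx, hAv, hαμ]⟩
  exact this
end

section
/- Let Z ∈ {0,1}^{n×K} with each row nonzero, and suppose the SBMO with connectivity matrix B invertible and Z having a pure node per community holds. Define the subcommunity set T = {z ∈ {0,1}^{1×K} : ∃ i, Z_i = z}, and the associated SBM with |T| communities (one per distinct row of Z) and connectivity matrix B'_{y,z} = y B zᵀ for y, z ∈ T. Then this SBM satisfies (SBM1): for distinct y, z ∈ T, the rows of B' indexed by y and z are different, i.e. there exists w ∈ T with y B wᵀ ≠ z B wᵀ. -/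
open Matrix

/-- The subcommunity SBM associated to an identifiable SBMO satisfies (SBM1): for distinct
membership rows `y ≠ z` of `Z`, the corresponding rows of `B'` (`B'_{y,w} = y B wᵀ`) differ,
i.e. there is `w` in the row set `T` of `Z` with `y B wᵀ ≠ z B wᵀ`. -/
theorem subcommunity_sbm_satisfies_sbm1 {n K : ℕ}
    (B : Matrix (Fin K) (Fin K) ℝ) (hBsymm : B.IsSymm) (hBinv : IsUnit B.det)
    (Z : Matrix (Fin n) (Fin K) ℝ)
    (hZbin : ∀ i k, Z i k = 0 ∨ Z i k = 1)
    (hZnozero : ∀ i, Z i ≠ 0)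
    (hpure : ∀ k : Fin K, ∃ i : Fin n, Z i = Pi.single k 1) :
    ∀ y ∈ Set.range (fun i => Z i), ∀ z ∈ Set.range (fun i => Z i), y ≠ z →
      ∃ w ∈ Set.range (fun i => Z i),
        dotProduct y (B.mulVec w) ≠ dotProduct z (B.mulVec w) := by
  intro y hy z hz hyz
  -- vecMul y B ≠ vecMul z B, since B is invertible
  have hne : Matrix.vecMul y B ≠ Matrix.vecMul z B := by
    intro h
    apply hyz
    have := congrArg (fun v => Matrix.vecMul v B⁻¹) h
    simpa [Matrix.vecMul_vecMul, Matrix.mul_nonsing_inv B hBinv] using this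
  obtain ⟨k, hk⟩ := Function.ne_iff.mp hne
  obtain ⟨i, hi⟩ := hpure k
  refine ⟨Pi.single k 1, ⟨i, hi⟩, ?_⟩
  have key : ∀ v : Fin K → ℝ,
      dotProduct v (B.mulVec (Pi.single k 1)) = Matrix.vecMul v B k := by
    intro v
    simp [dotProduct, Matrix.mulVec, Matrix.vecMul, dotProduct,
      Pi.single_apply, Finset.mul_sum, mul_comm]
  rw [key, key]
  exact hk
end

section
/- Let Z ∈ {0,1}^{n×K} contain a pure node for each community (for each k there is a row equal to e_k), and suppose U = Z X = Z' X' where X, X' ∈ ℝ^{K×K} are invertible and Z' ∈ {0,1}^{n×K} has no zero row. Then each row X_k of X is a sum of a nonempty subset of rows of X': X_k = Σ_{ℓ ∈ S_k} X'_ℓ for some nonempty S_k ⊆ {1,…,K}; and if additionally Z' contains a pure node for each community, the sets S₁,…,S_K are pairwise disjoint singletons. -/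
open Matrix

/-- Helper: if row `i` of `W` is the pure vector `e k` and `W * C = A * B` with `A` binary,
then row `k` of `C` is the sum of the rows of `B` selected by row `i` of `A`. -/
lemma aux_extract {n K : ℕ} (A : Matrix (Fin n) (Fin K) ℝ)
    (B C : Matrix (Fin K) (Fin K) ℝ)
    (hAbin : ∀ i l, A i l = 0 ∨ A i l = 1) (i : Fin n) (k : Fin K)
    (W : Matrix (Fin n) (Fin K) ℝ) (hW : W i = Pi.single k 1)
    (heq : W * C = A * B) :
    C k = ∑ l ∈ Finset.univ.filter (fun l => A i l = 1), B l := by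
  have h1 : (W * C) i = C k := by
    funext j
    simp [Matrix.mul_apply, hW, Pi.single_apply]
  have h2 : (A * B) i = ∑ l ∈ Finset.univ.filter (fun l => A i l = 1), B l := by
    funext j
    erw [Finset.sum_apply, Matrix.mul_apply, Finset.sum_filter]
    refine Finset.sum_congr rfl fun l _ => ?_
    rcases hAbin i l with h | h <;> simp [h]
  rw [← h1, heq, h2]

/-- Structural step in the SBMO identifiability proof: if `Z X = Z' X'` with `X, X'`
invertible, `Z` containing a pure node per community and `Z'` binary with no zero row,
then each row of `X` is a sum of a nonempty subset of rows of `X'`; if moreover `Z'` has a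
pure node per community, those subsets are pairwise disjoint singletons. -/
theorem rows_of_X_are_sums {n K : ℕ}
    (Z Z' : Matrix (Fin n) (Fin K) ℝ)
    (X X' : Matrix (Fin K) (Fin K) ℝ)
    (hX : IsUnit X.det) (hX' : IsUnit X'.det)
    (hZbin : ∀ i k, Z i k = 0 ∨ Z i k = 1)
    (hZ'bin : ∀ i k, Z' i k = 0 ∨ Z' i k = 1)
    (hZpure : ∀ k : Fin K, ∃ i : Fin n, Z i = Pi.single k 1)
    (hZ'nozero : ∀ i : Fin n, Z' i ≠ 0)
    (heq : Z * X = Z' * X') :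
    (∀ k : Fin K, ∃ S : Finset (Fin K), S.Nonempty ∧ X k = ∑ l ∈ S, X' l) ∧
    ((∀ k : Fin K, ∃ i : Fin n, Z' i = Pi.single k 1) →
      ∃ S : Fin K → Finset (Fin K),
        (∀ k, X k = ∑ l ∈ S k, X' l) ∧
        (∀ k, ∃ l, S k = {l}) ∧
        (∀ k k', k ≠ k' → Disjoint (S k) (S k'))) := by
  have hXu : IsUnit X := (Matrix.isUnit_iff_isUnit_det X).2 hX
  have hX'u : IsUnit X' := (Matrix.isUnit_iff_isUnit_det X').2 hX'
  have hli : LinearIndependent ℝ (fun i => X i) :=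
    Matrix.linearIndependent_rows_iff_isUnit.2 hXu
  have hli' : LinearIndependent ℝ (fun i => X' i) :=
    Matrix.linearIndependent_rows_iff_isUnit.2 hX'u
  constructor
  · intro k
    obtain ⟨i, hi⟩ := hZpure k
    refine ⟨Finset.univ.filter (fun l => Z' i l = 1), ?_,
      aux_extract Z' X' X hZ'bin i k Z hi heq⟩
    rw [Finset.filter_nonempty_iff]
    by_contra h
    push_neg at h
    apply hZ'nozero i
    funext l
    rcases hZ'bin i l with h0 | h1
    · exact h0
    · exact absurd h1 (h l (Finset.mem_univ l))
  · intro hZ'pure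
    choose f hf using hZpure
    choose g hg using hZ'pure
    set Sk : Fin K → Finset (Fin K) :=
      fun k => Finset.univ.filter (fun l => Z' (f k) l = 1) with hSk
    set Tl : Fin K → Finset (Fin K) :=
      fun l => Finset.univ.filter (fun m => Z (g l) m = 1) with hTl
    have hS : ∀ k, X k = ∑ l ∈ Sk k, X' l :=
      fun k => aux_extract Z' X' X hZ'bin (f k) k Z (hf k) heq
    have hT : ∀ l, X' l = ∑ m ∈ Tl l, X m :=
      fun l => aux_extract Z X X' hZbin (g l) l Z' (hg l) heq.symm
    have hTne : ∀ l, (Tl l).Nonempty := by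
      intro l
      rw [Finset.nonempty_iff_ne_empty]
      intro hemp
      apply hli'.ne_zero l
      rw [hT l, hemp]
      exact Finset.sum_empty
    -- coefficient argument
    have hstep : ∀ k, (∀ l ∈ Sk k, Tl l = {k}) ∧ (Sk k).card = 1 := by
      intro k
      set a : Fin K → ℝ :=
        fun m => ∑ l ∈ Sk k, (if m ∈ Tl l then (1 : ℝ) else 0) with ha
      have hsum : ∑ m, a m • X m = X k := by
        calc ∑ m, a m • X m
            = ∑ m, ∑ l ∈ Sk k, (if m ∈ Tl l then X m else 0) := by
              refine Finset.sum_congr rfl fun m _ => ?_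
              rw [ha, Finset.sum_smul]
              exact Finset.sum_congr rfl fun l _ => by
                split <;> simp
          _ = ∑ l ∈ Sk k, ∑ m, (if m ∈ Tl l then X m else 0) := Finset.sum_comm
          _ = ∑ l ∈ Sk k, ∑ m ∈ Tl l, X m := by
              refine Finset.sum_congr rfl fun l _ => ?_
              erw [← Finset.sum_filter, Finset.filter_mem_eq_inter,
                Finset.univ_inter]
          _ = ∑ l ∈ Sk k, X' l := Finset.sum_congr rfl fun l _ => (hT l).symm
          _ = X k := (hS k).symm
      have hdelta : ∀ m, a m = if m = k then 1 else 0 := by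
        rw [Fintype.linearIndependent_iff] at hli
        intro m
        have h0 : ∑ m, (a m - if m = k then 1 else 0) • X m = 0 := by
          have : ∑ m, (if m = k then (1:ℝ) else 0) • X m = X k := by
            simp [ite_smul]
            exact (Finset.sum_ite_eq' Finset.univ k (fun x => X x)).trans (if_pos (Finset.mem_univ k))
          simp only [sub_smul, Finset.sum_sub_distrib, hsum, this, sub_self]
        have := hli (fun m => a m - if m = k then 1 else 0) h0 m
        linarith [this]
      have hTsub : ∀ l ∈ Sk k, Tl l = {k} := by
        intro l hl
        have hsub : Tl l ⊆ {k} := by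
          intro m hm
          rw [Finset.mem_singleton]
          by_contra hmk
          have h0 : a m = 0 := by rw [hdelta m, if_neg hmk]
          rw [ha] at h0
          have := (Finset.sum_eq_zero_iff_of_nonneg
            (fun l _ => by positivity)).1 h0 l hl
          rw [if_pos hm] at this
          norm_num at this
        rcases Finset.subset_singleton_iff.1 hsub with h | h
        · exact absurd h (Finset.nonempty_iff_ne_empty.1 (hTne l))
        · exact h
      refine ⟨hTsub, ?_⟩
      have h1 : ∑ l ∈ Sk k, (if k ∈ Tl l then (1:ℝ) else 0) = 1 := by
        have h1 : a k = 1 := by rw [hdelta k, if_pos rfl]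
        exact h1
      have : ∑ l ∈ Sk k, (if k ∈ Tl l then (1:ℝ) else 0) = (Sk k).card := by
        rw [Finset.sum_congr rfl fun l hl => ?_, Finset.sum_const, nsmul_eq_mul,
          mul_one]
        rw [if_pos]
        rw [hTsub l hl]
        exact Finset.mem_singleton_self k
      rw [this] at h1
      exact_mod_cast h1
    have hcard : ∀ k, ∃ l, Sk k = {l} := fun k =>
      Finset.card_eq_one.1 (hstep k).2
    choose σ hσ using hcard
    have hXσ : ∀ k, X k = X' (σ k) := by
      intro k
      rw [hS k, hσ k]
      exact Finset.sum_singleton _ _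
    have hinj : Function.Injective σ := by
      intro k k' h
      apply hli.injective
      show X k = X k'
      rw [hXσ k, hXσ k', h]
    exact ⟨Sk, hS, fun k => ⟨σ k, hσ k⟩, fun k k' hkk' => by
      rw [hσ k, hσ k', Finset.disjoint_singleton]
      exact fun h => hkk' (hinj h)⟩
end
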